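/- Let (T,F) be a graph-labelled tree whose accessibility graph G is connected. Then every label graph G_v ∈ F is isomorphic to an induced subgraph of G. -/

import Mathlib

/-!
Fix a node `v` and a tree-neighbour `u` of `v`. Leaves exist on both sides of the edge `vu`, so
connectivity of the accessibility graph yields an accessible pair of leaves `x`, `y` with `y`
beyond `vu` and `x` not. The tree path from `x` to `y` runs through `v` and then `u`, so its final
segment is an admissible path `v u ⋯ y`. Choosing such a leaf `l u` for every marker `u` of `G_v`,
the tree path from `l u` to `l u'` is the first path reversed and glued at `v` to the second, and it
is admissible exactly when `u` and `u'` are adjacent in `G_v`. Hence `u ↦ l u` is an induced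
embedding of `G_v` into the accessibility graph.
-/

open SimpleGraph

variable {V : Type}

/-- A vertex of a tree is a leaf if it has exactly one neighbour. -/
def IsLeaf (T : SimpleGraph V) (v : V) : Prop := ∃! w, T.Adj v w

/-- Admissibility of a walk in a graph-labelled tree: at every internal vertex of the
walk, the marker vertices corresponding to the two consecutive tree-edges are adjacent
in the label graph. -/
inductive Admissible (T : SimpleGraph V) (F : ∀ v : V, SimpleGraph (T.neighborSet v)) :
    ∀ {a b : V}, T.Walk a b → Prop
  | nil {a : V} : Admissible T F (SimpleGraph.Walk.nil : T.Walk a a)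
  | single {a b : V} (h : T.Adj a b) :
      Admissible T F (SimpleGraph.Walk.cons h SimpleGraph.Walk.nil)
  | cons {a v b c : V} (h1 : T.Adj a v) (h2 : T.Adj v b) (p : T.Walk b c)
      (hadj : (F v).Adj ⟨a, h1.symm⟩ ⟨b, h2⟩)
      (hp : Admissible T F (SimpleGraph.Walk.cons h2 p)) :
      Admissible T F (SimpleGraph.Walk.cons h1 (SimpleGraph.Walk.cons h2 p))

/-- `b` is accessible from `a`: the (unique) path joining them is admissible. -/
def Accessible (T : SimpleGraph V) (F : ∀ v : V, SimpleGraph (T.neighborSet v))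
    (a b : V) : Prop :=
  ∃ p : T.Walk a b, p.IsPath ∧ Admissible T F p

/-- The accessibility graph of a graph-labelled tree: vertices are the leaves of the
tree, two leaves being adjacent iff one is accessible from the other. -/
def accGraph (T : SimpleGraph V) (F : ∀ v : V, SimpleGraph (T.neighborSet v)) :
    SimpleGraph {v : V // IsLeaf T v} :=
  SimpleGraph.fromRel (fun x y => Accessible T F ↑x ↑y)

open SimpleGraph.Walk

theorem exists_adj_ne_of_not_isLeaf {G : SimpleGraph V} {x y : V} (hx : ¬IsLeaf G x)
    (h : G.Adj x y) : ∃ w, G.Adj x w ∧ w ≠ y := by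
  by_contra! hy
  exact hx ⟨y, h, hy⟩

namespace SimpleGraph

variable {G : SimpleGraph V}

theorem Walk.exists_eq_cons_of_snd_eq {v w u : V} (p : G.Walk v w) (hp : p.snd = u)
    (hne : u ≠ v) : ∃ (h : G.Adj v u) (t : G.Walk u w), p = cons h t := by
  cases p with
  | nil => exact absurd hp.symm hne
  | cons h t =>
    rw [snd_cons] at hp
    subst hp
    exact ⟨h, t, rfl⟩

namespace IsAcyclic

theorem eq_of_isPath (hG : G.IsAcyclic) {a b : V} {p q : G.Walk a b} (hp : p.IsPath)
    (hq : q.IsPath) : p = q :=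
  Subtype.mk.inj <| (hG.subsingleton_path a b).elim ⟨p, hp⟩ ⟨q, hq⟩

theorem snd_eq_of_isPath (hG : G.IsAcyclic) {v a b : V} {p : G.Walk v a} {q : G.Walk v b}
    (hp : p.IsPath) (hq : q.IsPath) (hab : a = b) : p.snd = q.snd := by
  subst hab
  rw [hG.eq_of_isPath hp hq]

theorem eq_of_mem_support_of_snd_ne (hG : G.IsAcyclic) {v a b w : V} {p : G.Walk v a}
    {q : G.Walk v b} (hp : p.IsPath) (hq : q.IsPath) (hne : p.snd ≠ q.snd) (hwp : w ∈ p.support)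
    (hwq : w ∈ q.support) : w = v := by
  classical
  by_contra hw
  apply hne
  rw [← p.snd_takeUntil hw hwp, ← q.snd_takeUntil hw hwq,
    hG.eq_of_isPath (hp.takeUntil hwp) (hq.takeUntil hwq)]

theorem isPath_reverse_append (hG : G.IsAcyclic) {v a b : V} {p : G.Walk v a} {q : G.Walk v b}
    (hp : p.IsPath) (hq : q.IsPath) (hne : p.snd ≠ q.snd) : (p.reverse.append q).IsPath := by
  rw [isPath_def, support_append, support_reverse]
  refine (List.nodup_reverse.mpr hp.support_nodup).append hq.support_nodup.tail ?_
  intro w hwp hwq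
  obtain rfl := hG.eq_of_mem_support_of_snd_ne hp hq hne (List.mem_reverse.mp hwp)
    (List.mem_of_mem_tail hwq)
  have hnd := hq.support_nodup
  rw [← cons_tail_support] at hnd
  exact (List.nodup_cons.mp hnd).1 hwq

theorem exists_isPath_concat (hG : G.IsAcyclic) {v x : V} {p : G.Walk v x} (hp : p.IsPath)
    (hnil : ¬p.Nil) (hx : ¬IsLeaf G x) : ∃ w, ∃ h : G.Adj x w, (p.concat h).IsPath := by
  obtain ⟨w, hxw, hw⟩ := exists_adj_ne_of_not_isLeaf hx (p.adj_penultimate hnil).symm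
  exact ⟨w, hxw, hp.concat (fun hmem => hw (hG.eq_penultimate_of_adj_end hp hxw hmem)) hxw⟩

theorem exists_isLeaf_isPath_cons [Finite V] (hG : G.IsAcyclic) {v u : V} (h : G.Adj v u) :
    ∃ l, IsLeaf G l ∧ ∃ t : G.Walk u l, (cons h t).IsPath := by
  have := Fintype.ofFinite V
  by_contra! hno
  have hlong : ∀ n, ∃ x, ∃ t : G.Walk u x, (cons h t).IsPath ∧ n ≤ t.length := by
    intro n
    induction n with
    | zero => exact ⟨u, nil, by simpa using h.ne, le_rfl⟩
    | succ n ih =>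
      obtain ⟨x, t, ht, hn⟩ := ih
      obtain ⟨w, hxw, hpath⟩ := hG.exists_isPath_concat ht not_nil_cons (hno x · t ht)
      rw [concat_cons] at hpath
      exact ⟨w, t.concat hxw, hpath, by simpa using hn⟩
  obtain ⟨x, t, ht, hn⟩ := hlong (Fintype.card V)
  have := ht.length_lt
  simp only [length_cons] at this
  omega

theorem exists_isLeaf_isPath_snd_ne [Finite V] (hG : G.IsAcyclic) {v u : V} (h : G.Adj v u) :
    ∃ l, IsLeaf G l ∧ ∃ p : G.Walk v l, p.IsPath ∧ p.snd ≠ u := by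
  by_cases hv : IsLeaf G v
  · exact ⟨v, hv, nil, IsPath.nil, by simpa using h.ne⟩
  · obtain ⟨u', hu', hne⟩ := exists_adj_ne_of_not_isLeaf hv h
    obtain ⟨l, hl, t, ht⟩ := hG.exists_isLeaf_isPath_cons hu'
    exact ⟨l, hl, cons hu' t, ht, by simpa using hne⟩

end IsAcyclic

end SimpleGraph

section Admissibility

variable {T : SimpleGraph V} {F : ∀ v : V, SimpleGraph (T.neighborSet v)}

def AdmissibleTurn (F : ∀ v : V, SimpleGraph (T.neighborSet v)) (d d' : T.Dart) : Prop :=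
  ∃ h : d'.fst = d.snd, (F d.snd).Adj ⟨d.fst, d.adj.symm⟩ ⟨d'.snd, h ▸ d'.adj⟩

theorem AdmissibleTurn.symm {d d' : T.Dart} (h : AdmissibleTurn F d d') :
    AdmissibleTurn F d'.symm d.symm := by
  obtain ⟨⟨a, b⟩, hab⟩ := d
  obtain ⟨⟨c, e⟩, hce⟩ := d'
  obtain ⟨hcb, hadj⟩ := h
  change c = b at hcb
  subst hcb
  exact ⟨rfl, hadj.symm⟩

theorem admissible_iff_isChain_darts {a b : V} (p : T.Walk a b) :
    Admissible T F p ↔ p.darts.IsChain (AdmissibleTurn F) := by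
  induction p with
  | nil => simpa using Admissible.nil
  | cons h q ih =>
    cases q with
    | nil => simpa using Admissible.single h
    | cons h' r =>
      rw [darts_cons, darts_cons, List.isChain_cons_cons, ← darts_cons, ← ih]
      constructor
      · intro hadm
        cases hadm with
        | cons _ _ _ hadj hr => exact ⟨⟨rfl, hadj⟩, hr⟩
      · rintro ⟨⟨_, hadj⟩, hr⟩
        exact Admissible.cons h h' r hadj hr

theorem Admissible.reverse {a b : V} {p : T.Walk a b} (hp : Admissible T F p) :
    Admissible T F p.reverse := by
  rw [admissible_iff_isChain_darts] at hp ⊢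
  rw [darts_reverse, List.isChain_reverse, List.isChain_map]
  exact hp.imp fun _ _ => AdmissibleTurn.symm

theorem admissible_reverse_iff {a b : V} {p : T.Walk a b} :
    Admissible T F p.reverse ↔ Admissible T F p :=
  ⟨fun h => by simpa using h.reverse, Admissible.reverse⟩

theorem Admissible.of_append_right {a b c : V} {p : T.Walk a b} {q : T.Walk b c}
    (h : Admissible T F (p.append q)) : Admissible T F q := by
  rw [admissible_iff_isChain_darts, darts_append] at h
  exact (admissible_iff_isChain_darts q).mpr h.right_of_append

theorem admissible_reverse_cons_append_cons_iff {v u u' a b : V} (h : T.Adj v u)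
    (h' : T.Adj v u') (t : T.Walk u a) (s : T.Walk u' b) :
    Admissible T F ((cons h t).reverse.append (cons h' s)) ↔
      Admissible T F (cons h t) ∧ Admissible T F (cons h' s) ∧
        (F v).Adj ⟨u, h⟩ ⟨u', h'⟩ := by
  rw [← admissible_reverse_iff (p := cons h t)]
  simp only [admissible_iff_isChain_darts, darts_append, List.isChain_append]
  simp [darts_reverse, AdmissibleTurn]

theorem Accessible.symm {a b : V} (h : Accessible T F a b) : Accessible T F b a :=
  let ⟨p, hp, hadm⟩ := h
  ⟨p.reverse, hp.reverse, hadm.reverse⟩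

theorem accGraph_adj {x y : {v : V // IsLeaf T v}} :
    (accGraph T F).Adj x y ↔ x ≠ y ∧ Accessible T F x y := by
  rw [accGraph, fromRel_adj, or_iff_left_of_imp Accessible.symm]

theorem SimpleGraph.IsAcyclic.accessible_iff (hT : T.IsAcyclic) {a b : V} {p : T.Walk a b}
    (hp : p.IsPath) : Accessible T F a b ↔ Admissible T F p :=
  ⟨fun ⟨_, hq, hadm⟩ => hT.eq_of_isPath hq hp ▸ hadm, fun h => ⟨p, hp, h⟩⟩

end Admissibility

theorem exists_isLeaf_admissible_cons [Finite V] {T : SimpleGraph V} (hT : T.IsTree)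
    {F : ∀ v : V, SimpleGraph (T.neighborSet v)} (hconn : (accGraph T F).Connected) {v u : V}
    (h : T.Adj v u) :
    ∃ l, IsLeaf T l ∧ ∃ t : T.Walk u l, (cons h t).IsPath ∧ Admissible T F (cons h t) := by
  let S : Set V := {x | ∃ p : T.Walk v x, p.IsPath ∧ p.snd = u}
  obtain ⟨a, ha, t, ht⟩ := hT.isAcyclic.exists_isLeaf_isPath_cons h
  obtain ⟨b, hb, q, hq, hqu⟩ := hT.isAcyclic.exists_isLeaf_isPath_snd_ne h
  have hbS : b ∉ S := fun ⟨p, hp, hpu⟩ => hqu (hT.isAcyclic.eq_of_isPath hp hq ▸ hpu)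
  obtain ⟨w⟩ := hconn.preconnected ⟨b, hb⟩ ⟨a, ha⟩
  obtain ⟨⟨⟨x, y⟩, hxy⟩, -, hxS, hyS⟩ := w.exists_boundary_dart {z | z.1 ∉ S} hbS
    (by simpa using ⟨cons h t, ht, snd_cons t h⟩)
  obtain ⟨px, hpx⟩ := hT.connected.exists_isPath v x
  obtain ⟨py, hpy, hpyu⟩ : y.1 ∈ S := by simpa using hyS
  have hne : px.snd ≠ py.snd := fun hsnd => hxS ⟨px, hpx, hsnd.trans hpyu⟩
  have hadm := (hT.isAcyclic.accessible_iff (hT.isAcyclic.isPath_reverse_append hpx hpy hne)).mp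
    (accGraph_adj.mp hxy).2
  obtain ⟨h', t', rfl⟩ := py.exists_eq_cons_of_snd_eq hpyu h.ne.symm
  exact ⟨y, y.2, t', hpy, hadm.of_append_right⟩

/-- every label graph of a graph-labelled tree with connected
accessibility graph is isomorphic to an induced subgraph of the accessibility graph. -/
theorem stmt3 [Fintype V] (T : SimpleGraph V) (hT : T.IsTree)
    (F : ∀ v : V, SimpleGraph (T.neighborSet v))
    (hconn : (accGraph T F).Connected) (v : V) :
    Nonempty ((F v) ↪g (accGraph T F)) := by
  choose l hl t ht hadm using fun u : T.neighborSet v =>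
    exists_isLeaf_admissible_cons hT hconn ((T.mem_neighborSet v u).mp u.2)
  have hinj : Function.Injective l := fun u u' h =>
    Subtype.ext <| by simpa only [snd_cons] using hT.isAcyclic.snd_eq_of_isPath (ht u) (ht u') h
  refine ⟨⟨⟨fun u => ⟨l u, hl u⟩, fun u u' h => hinj (congrArg Subtype.val h)⟩, ?_⟩⟩
  intro u u'
  by_cases huu : u = u'
  · subst huu
    exact iff_of_false (SimpleGraph.irrefl _) (SimpleGraph.irrefl _)
  have hpath := hT.isAcyclic.isPath_reverse_append (ht u) (ht u')
    (by simpa only [snd_cons, ne_eq, Subtype.ext_iff] using huu)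
  show (accGraph T F).Adj ⟨l u, hl u⟩ ⟨l u', hl u'⟩ ↔ _
  rw [accGraph_adj, hT.isAcyclic.accessible_iff hpath, admissible_reverse_cons_append_cons_iff]
  exact ⟨fun h => h.2.2.2,
    fun h => ⟨fun heq => huu (hinj (congrArg Subtype.val heq)), hadm u, hadm u', h⟩⟩
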